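/- The generating function of the monic Meixner polynomials satisfies Σ_{n=0}^∞ (t^n/n!) 𝒮_n(x; a; p) = ((1-p+t)/(1-p+tp))^x · ((1-p)/(1-p+tp))^a for x ∈ ℕ, a > 0, p ∈ (0,1) and t in a neighborhood of 0; in particular e_t(x+y, a+b) = e_t(x,a)·e_t(y,b). -/

import Mathlib

/-- Rising factorial (Pochhammer symbol) `(a)^{(k)} = a(a+1)⋯(a+k-1)`. -/
noncomputable def risingFact (a : ℝ) (k : ℕ) : ℝ := ∏ i ∈ Finset.range k, (a + i)

/-- The monic Meixner polynomial
`𝒮_n(x;a;p) = ∑_{k=0}^n C(n,k) (1-1/p)^{k-n} (a+k)^{(n-k)} (x)_k`. -/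
noncomputable def meixner (n : ℕ) (a p : ℝ) (x : ℕ) : ℝ :=
  ∑ k ∈ Finset.range (n + 1),
    (n.choose k : ℝ) * (1 - 1 / p) ^ ((k : ℤ) - (n : ℤ)) *
      risingFact (a + k) (n - k) * (x.descFactorial k : ℝ)

/-- The closed form of the generating function of monic Meixner polynomials:
`e_t(x,a) = ((1-p+t)/(1-p+tp))^x ((1-p)/(1-p+tp))^a`. -/
noncomputable def meixnerGen (p t : ℝ) (x : ℕ) (a : ℝ) : ℝ :=
  ((1 - p + t) / (1 - p + t * p)) ^ x * ((1 - p) / (1 - p + t * p)) ^ a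

/-!
Write `q = 1 - 1/p` and `u = t/q`. Expanding `𝒮_n` and exchanging the series in `n` with the
finite sum over `k ≤ x` (the terms with `k > x` vanish since `(x)_k = 0`), the substitution
`n = m + k` turns the `k`-th series into `(x)_k t^k/k!` times the binomial series
`∑ (a+k)^{(m)} u^m / m! = (1 - u)^{-(a+k)}`, valid for `|u| < 1`, i.e. `|t| < (1-p)/p`.
The remaining finite sum is `(1-u)^{-a} (1 + t/(1-u))^x` by the binomial theorem, and
`1 - u = (1-p+tp)/(1-p)` identifies it with `e_t(x,a)`, whose multiplicativity is then immediate.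
-/

open Finset Nat

theorem risingFact_eq_ascPochhammer_eval (a : ℝ) (n : ℕ) :
    risingFact a n = (ascPochhammer ℝ n).eval a := by
  induction n with
  | zero => simp [risingFact]
  | succ n ih => rw [ascPochhammer_succ_eval, ← ih, risingFact, prod_range_succ]; rfl

theorem risingFact_eq_factorial_mul_choose (a : ℝ) (n : ℕ) :
    risingFact a n = n ! * Ring.choose (a + n - 1) n := by
  rw [Ring.choose_eq_smul, Polynomial.descPochhammer_smeval_eq_ascPochhammer,
    Polynomial.ascPochhammer_smeval_eq_eval,
    smul_eq_mul, mul_inv_cancel_left₀ (by positivity), risingFact_eq_ascPochhammer_eval]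
  congr 1
  ring

theorem hasSum_risingFact_div_factorial_mul_pow (α : ℝ) {u : ℝ} (hu : |u| < 1) :
    HasSum (fun m => risingFact α m / m ! * u ^ m) ((1 - u) ^ (-α)) := by
  have hball : u ∈ Metric.eball (0 : ℝ) 1 := by
    rwa [Metric.mem_eball, edist_zero_right, ← ofReal_norm, ENNReal.ofReal_lt_one,
      Real.norm_eq_abs]
  have h1u : 0 ≤ 1 - u := by linarith [le_abs_self u]
  have h := (Real.one_div_one_sub_rpow_hasFPowerSeriesOnBall_zero α).hasSum hball
  rw [zero_add, one_div, ← Real.rpow_neg h1u] at h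
  refine h.congr_fun fun m => ?_
  rw [FormalMultilinearSeries.ofScalars_apply_eq, risingFact_eq_factorial_mul_choose,
    mul_div_cancel_left₀ _ (by positivity), smul_eq_mul]

theorem sum_range_succ_eq_of_forall_gt_eq_zero {M : Type*} [AddCommMonoid M] {g : ℕ → M}
    {m n : ℕ} (hm : ∀ k, m < k → g k = 0) (hn : ∀ k, n < k → g k = 0) :
    ∑ k ∈ range (m + 1), g k = ∑ k ∈ range (n + 1), g k := by
  rw [← eventually_constant_sum (fun k hk => hm k hk) (Nat.le_add_right (m + 1) (n + 1)),
    ← eventually_constant_sum (fun k hk => hn k hk) (by omega : n + 1 ≤ m + 1 + (n + 1))]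

theorem hasSum_choose_mul_zpow_mul_risingFact {q t : ℝ} (hq : q ≠ 0) (ht : |t / q| < 1)
    (β : ℝ) (k : ℕ) :
    HasSum (fun n : ℕ => t ^ n / n ! * (n.choose k * q ^ ((k : ℤ) - n) * risingFact β (n - k)))
      (t ^ k / k ! * (1 - t / q) ^ (-β)) := by
  have hshift : HasSum (fun m : ℕ => t ^ (m + k) / (m + k)! *
      ((m + k).choose k * q ^ ((k : ℤ) - (m + k : ℕ)) * risingFact β (m + k - k)))
      (t ^ k / k ! * (1 - t / q) ^ (-β)) := by
    refine ((hasSum_risingFact_div_factorial_mul_pow β ht).mul_left (t ^ k / k !)).congr_fun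
      fun m => ?_
    have hz : q ^ ((k : ℤ) - (m + k : ℕ)) = (q ^ m)⁻¹ := by
      rw [Nat.cast_add, sub_add_cancel_right, zpow_neg, zpow_natCast]
    rw [hz, Nat.add_sub_cancel, Nat.add_comm m k, Nat.cast_add_choose ℝ, div_pow, pow_add]
    field_simp
  refine (Function.Injective.hasSum_iff (add_left_injective k) fun n hn => ?_).mp hshift
  have hnk : n < k := by
    by_contra! h
    exact hn ⟨n - k, Nat.sub_add_cancel h⟩
  simp [Nat.choose_eq_zero_of_lt hnk]

theorem sum_descFactorial_mul_rpow_neg {v : ℝ} (hv : 0 < v) (t a : ℝ) (x : ℕ) :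
    ∑ k ∈ range (x + 1), t ^ k / k ! * v ^ (-(a + k)) * x.descFactorial k
      = (1 + t / v) ^ x * v ^ (-a) := by
  have hterm : ∀ k : ℕ, t ^ k / k ! * v ^ (-(a + k)) * x.descFactorial k
      = v ^ (-a) * ((t / v) ^ k * 1 ^ (x - k) * x.choose k) := by
    intro k
    rw [neg_add, Real.rpow_add hv, Real.rpow_neg_natCast,
      Nat.descFactorial_eq_factorial_mul_choose, Nat.cast_mul, div_pow, zpow_neg, zpow_natCast,
      one_pow, mul_one]
    field_simp
  rw [sum_congr rfl fun k _ => hterm k, ← mul_sum, ← add_pow, add_comm (t / v), mul_comm]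

theorem hasSum_pow_div_factorial_mul_meixner {p t : ℝ} (hq : 1 - 1 / p ≠ 0)
    (ht : |t / (1 - 1 / p)| < 1) (a : ℝ) (x : ℕ) :
    HasSum (fun n => t ^ n / n ! * meixner n a p x)
      ((1 + t / (1 - t / (1 - 1 / p))) ^ x * (1 - t / (1 - 1 / p)) ^ (-a)) := by
  have hv : 0 < 1 - t / (1 - 1 / p) := by linarith [le_abs_self (t / (1 - 1 / p))]
  rw [← sum_descFactorial_mul_rpow_neg hv]
  refine (hasSum_sum fun (k : ℕ) _ =>
    (hasSum_choose_mul_zpow_mul_risingFact hq ht (a + k) k).mul_right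
      (x.descFactorial k : ℝ)).congr_fun fun n => ?_
  simp only [meixner, mul_sum, ← mul_assoc]
  refine sum_range_succ_eq_of_forall_gt_eq_zero (fun k hk => ?_) (fun k hk => ?_)
  · simp [Nat.choose_eq_zero_of_lt hk]
  · simp [Nat.descFactorial_eq_zero_iff_lt.2 hk]

theorem meixnerGen_eq {p t : ℝ} (hp0 : 0 < p) (hp1 : p < 1) (ht : 0 < 1 - p + t * p)
    (x : ℕ) (a : ℝ) :
    meixnerGen p t x a = (1 + t / (1 - t / (1 - 1 / p))) ^ x * (1 - t / (1 - 1 / p)) ^ (-a) := by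
  have h1p : 0 < 1 - p := by linarith
  have hp_sub_one : p - 1 ≠ 0 := by linarith
  have hv : 1 - t / (1 - 1 / p) = (1 - p + t * p) / (1 - p) := by
    field_simp
    ring
  have hx : 1 + t / ((1 - p + t * p) / (1 - p)) = (1 - p + t) / (1 - p + t * p) := by
    field_simp
    ring
  rw [hv, hx, Real.rpow_neg (by positivity), ← Real.inv_rpow (by positivity), inv_div, meixnerGen]

theorem meixnerGen_add_add {p t : ℝ} (hp1 : p < 1) (ht : 0 < 1 - p + t * p)
    (x y : ℕ) (a b : ℝ) :
    meixnerGen p t (x + y) (a + b) = meixnerGen p t x a * meixnerGen p t y b := by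
  have hB : 0 < (1 - p) / (1 - p + t * p) := div_pos (by linarith) ht
  rw [meixnerGen, meixnerGen, meixnerGen, pow_add, Real.rpow_add hB]
  ring

/-- for `t` in a neighborhood of `0`, the exponential generating function of the
monic Meixner polynomials equals `e_t(x,a)`; in particular `e_t` satisfies the multiplicative
identity `e_t(x+y, a+b) = e_t(x,a)·e_t(y,b)`. -/
theorem stmt5 (p : ℝ) (hp : p ∈ Set.Ioo (0 : ℝ) 1) :
    ∃ ε > 0, ∀ t : ℝ, |t| < ε →
      (∀ (x : ℕ) (a : ℝ), 0 < a →
          HasSum (fun n : ℕ => t ^ n / (n.factorial : ℝ) * meixner n a p x)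
            (meixnerGen p t x a))
        ∧ ∀ (x y : ℕ) (a b : ℝ), 0 < a → 0 < b →
            meixnerGen p t (x + y) (a + b) = meixnerGen p t x a * meixnerGen p t y b := by
  obtain ⟨hp0, hp1⟩ := hp
  have hr : 0 < (1 - p) / p := div_pos (by linarith) hp0
  refine ⟨(1 - p) / p, hr, fun t ht => ?_⟩
  have hpos : 0 < 1 - p + t * p := by
    nlinarith [(lt_div_iff₀ hp0).1 ht, neg_abs_le t]
  have hq : 1 - 1 / p = -((1 - p) / p) := by
    field_simp
    ring
  have hu : |t / (1 - 1 / p)| < 1 := by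
    rwa [hq, abs_div, abs_neg, abs_of_pos hr, div_lt_one hr]
  refine ⟨fun x a _ => ?_, fun x y a b _ _ => meixnerGen_add_add hp1 hpos x y a b⟩
  rw [meixnerGen_eq hp0 hp1 hpos]
  exact hasSum_pow_div_factorial_mul_meixner (by rw [hq]; exact neg_ne_zero.2 hr.ne') hu a x
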